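/- Let k ≥ 1 and η = 1/√k, and let 𝒲 = {W_u^{1/√k} : u ∈ [0,1]^{2k}} be the family of all leaky-query channels with this leakage parameter. Then 2 ≤ ‖𝒲‖_F ≤ 2√2, 2√k ≤ ‖𝒲‖_* ≤ 2√k + 2, and ‖𝒲‖_op = 2. -/

import Mathlib

open Finset

namespace Paper

/-- A probability distribution on a finite type, given by its mass function. -/
def IsDist {α : Type*} [Fintype α] (p : α → ℝ) : Prop :=
  (∀ a, 0 ≤ p a) ∧ ∑ a, p a = 1

/-- A channel (row-stochastic kernel) from `α` to the finite alphabet `𝒴`. -/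
def IsChannel {α 𝒴 : Type*} [Fintype α] [Fintype 𝒴] (W : α → 𝒴 → ℝ) : Prop :=
  ∀ x, IsDist (W x)

/-- Total variation distance between mass functions on a finite type. -/
noncomputable def tvDist {α : Type*} [Fintype α] (p q : α → ℝ) : ℝ :=
  (∑ a, |p a - q a|) / 2

/-- The element `2i-1` (1-indexed) of `[2k]`, i.e. index `2i` in 0-indexed terms. -/
def lo {k : ℕ} (i : Fin k) : Fin (2 * k) := ⟨2 * i.val, by have := i.isLt; omega⟩

/-- The element `2i` (1-indexed) of `[2k]`, i.e. index `2i+1` in 0-indexed terms. -/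
def hi {k : ℕ} (i : Fin k) : Fin (2 * k) := ⟨2 * i.val + 1, by have := i.isLt; omega⟩

/-- The channel information matrix `H(W)`  (division by `0` yields `0` in Lean,
matching the convention that terms with zero denominator vanish). -/
noncomputable def HMat (k : ℕ) {𝒴 : Type*} [Fintype 𝒴] (W : Fin (2 * k) → 𝒴 → ℝ) :
    Matrix (Fin k) (Fin k) ℝ := fun i j =>
  ∑ y, (W (lo i) y - W (hi i) y) * (W (lo j) y - W (hi j) y) / (∑ x, W x y)

/-- Nuclear norm of a real symmetric matrix (sum of absolute values of eigenvalues). -/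
noncomputable def nucNorm {k : ℕ} (A : Matrix (Fin k) (Fin k) ℝ) : ℝ :=
  if h : A.IsHermitian then ∑ i, |h.eigenvalues i| else 0

/-- Operator (spectral) norm of a real symmetric matrix. -/
noncomputable def opNorm {k : ℕ} (A : Matrix (Fin k) (Fin k) ℝ) : ℝ :=
  if h : A.IsHermitian then ⨆ i, |h.eigenvalues i| else 0

/-- Frobenius norm of a matrix. -/
noncomputable def frobNorm {k : ℕ} (A : Matrix (Fin k) (Fin k) ℝ) : ℝ :=
  Real.sqrt (∑ i, ∑ j, (A i j) ^ 2)

/-- `‖𝒲‖_*`, the maximal nuclear norm of `H(W)` over the family. -/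
noncomputable def famNuc (k : ℕ) {𝒴 : Type*} [Fintype 𝒴]
    (𝒲 : Set (Fin (2 * k) → 𝒴 → ℝ)) : ℝ :=
  sSup ((fun W => nucNorm (HMat k W)) '' 𝒲)

/-- `‖𝒲‖_op`, the maximal operator norm of `H(W)` over the family. -/
noncomputable def famOp (k : ℕ) {𝒴 : Type*} [Fintype 𝒴]
    (𝒲 : Set (Fin (2 * k) → 𝒴 → ℝ)) : ℝ :=
  sSup ((fun W => opNorm (HMat k W)) '' 𝒲)

/-- `‖𝒲‖_F`, the maximal Frobenius norm of `H(W)` over the family. -/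
noncomputable def famFrob (k : ℕ) {𝒴 : Type*} [Fintype 𝒴]
    (𝒲 : Set (Fin (2 * k) → 𝒴 → ℝ)) : ℝ :=
  sSup ((fun W => frobNorm (HMat k W)) '' 𝒲)

/-- A deterministic sequentially interactive protocol over `n` users: to each user `t`
and each message prefix it assigns a channel. -/
def Protocol (k n : ℕ) (𝒴 : Type*) : Type _ :=
  (t : Fin n) → (Fin t.val → 𝒴) → Fin (2 * k) → 𝒴 → ℝ

/-- All channels used by the protocol belong to the family `𝒲`. -/
def UsesFamily {k n : ℕ} {𝒴 : Type*} (π : Protocol k n 𝒴)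
    (𝒲 : Set (Fin (2 * k) → 𝒴 → ℝ)) : Prop :=
  ∀ t pre, π t pre ∈ 𝒲

/-- All kernels used by the protocol are genuine channels. -/
def ChannelProtocol {k n : ℕ} {𝒴 : Type*} [Fintype 𝒴] (π : Protocol k n 𝒴) : Prop :=
  ∀ t pre, IsChannel (π t pre)

/-- Distribution of the first `t` messages of the transcript when the inputs are
i.i.d. with law `p`. -/
noncomputable def prefixDist {k n : ℕ} {𝒴 : Type*} [Fintype 𝒴] (π : Protocol k n 𝒴)
    (p : Fin (2 * k) → ℝ) (t : ℕ) (ht : t ≤ n) (y : Fin t → 𝒴) : ℝ :=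
  ∏ s : Fin t, ∑ x, p x *
    π ⟨s.val, lt_of_lt_of_le s.isLt ht⟩ (fun r => y ⟨r.val, lt_trans r.isLt s.isLt⟩) x (y s)

/-- Distribution of the full transcript `Y^n` when the inputs are i.i.d. with law `p`. -/
noncomputable def transDist {k n : ℕ} {𝒴 : Type*} [Fintype 𝒴] (π : Protocol k n 𝒴)
    (p : Fin (2 * k) → ℝ) (y : Fin n → 𝒴) : ℝ :=
  prefixDist π p n le_rfl y

/-- The uniform distribution on `[2k]`. -/
noncomputable def uniform2k (k : ℕ) : Fin (2 * k) → ℝ := fun _ => (2 * (k : ℝ))⁻¹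

/-- An `(n, ε)`-estimator using `𝒲`: a public-coin sequentially interactive protocol
(seed distribution `μ`, protocols `π u`, channels from `𝒲`) together with an estimator
`est` such that, for every input distribution `p`, the probability that the estimate is
more than `ε` away from `p` in total variation is at most `1/100`. -/
def IsEstimator {k n : ℕ} {𝒴 𝒰 : Type*} [Fintype 𝒴] [Fintype 𝒰]
    (𝒲 : Set (Fin (2 * k) → 𝒴 → ℝ)) (μ : 𝒰 → ℝ) (π : 𝒰 → Protocol k n 𝒴)
    (est : (Fin n → 𝒴) → 𝒰 → Fin (2 * k) → ℝ) (ε : ℝ) : Prop :=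
  IsDist μ ∧ (∀ u, UsesFamily (π u) 𝒲) ∧ (∀ u, ChannelProtocol (π u)) ∧
  (∀ y u, IsDist (est y u)) ∧
  ∀ p : Fin (2 * k) → ℝ, IsDist p →
    (∑ u, ∑ y : Fin n → 𝒴, μ u * (transDist (π u) p y *
      (if ε < tvDist (est y u) p then (1 : ℝ) else 0))) ≤ 1 / 100

/-- An `(n, ε)`-uniformity test using `𝒲`: a public-coin sequentially interactive
protocol together with a randomized decision rule `T` (probability of output `1`)
accepting uniform and rejecting `ε`-far distributions with probability `99/100`. -/
def IsUnifTest {k n : ℕ} {𝒴 𝒰 : Type*} [Fintype 𝒴] [Fintype 𝒰]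
    (𝒲 : Set (Fin (2 * k) → 𝒴 → ℝ)) (μ : 𝒰 → ℝ) (π : 𝒰 → Protocol k n 𝒴)
    (T : (Fin n → 𝒴) → 𝒰 → ℝ) (ε : ℝ) : Prop :=
  IsDist μ ∧ (∀ u, UsesFamily (π u) 𝒲) ∧ (∀ u, ChannelProtocol (π u)) ∧
  (∀ y u, T y u ∈ Set.Icc (0 : ℝ) 1) ∧
  (99 / 100 ≤ ∑ u, ∑ y : Fin n → 𝒴, μ u * (transDist (π u) (uniform2k k) y * (1 - T y u))) ∧
  ∀ p : Fin (2 * k) → ℝ, IsDist p → ε ≤ tvDist p (uniform2k k) →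
    99 / 100 ≤ ∑ u, ∑ y : Fin n → 𝒴, μ u * (transDist (π u) p y * T y u)

/-- Mutual information (in nats) of a joint mass function on `A × B`. -/
noncomputable def miNats {A B : Type*} [Fintype A] [Fintype B] (j : A → B → ℝ) : ℝ :=
  ∑ a, ∑ b, j a b * Real.log (j a b / ((∑ b', j a b') * (∑ a', j a' b)))

/-- Mutual information (in bits) of a joint mass function on `A × B`. -/
noncomputable def miBits {A B : Type*} [Fintype A] [Fintype B] (j : A → B → ℝ) : ℝ :=
  ∑ a, ∑ b, j a b * Real.logb 2 (j a b / ((∑ b', j a b') * (∑ a', j a' b)))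

/-- Binary entropy function (in bits). -/
noncomputable def binEnt (t : ℝ) : ℝ :=
  -(t * Real.logb 2 t) - (1 - t) * Real.logb 2 (1 - t)

/-- `±1` encoding of a Boolean. -/
def pm (b : Bool) : ℝ := if b then 1 else -1

/-- The joint mass function of `(Z_i, Y)` obtained from a joint mass function of `(Z, Y)`
for `Z ∈ {−1,+1}^k` (encoded via Booleans). -/
noncomputable def coordJoint {k : ℕ} {𝒴 : Type*} [Fintype 𝒴]
    (j : (Fin k → Bool) → 𝒴 → ℝ) (i : Fin k) : Bool → 𝒴 → ℝ :=
  fun b y => ∑ z : Fin k → Bool, if z i = b then j z y else 0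

/-- The Paninski perturbation `p_z` of the uniform distribution on `[2k]`:
`p_z(2i−1) = (1+2ε z_i)/(2k)` and `p_z(2i) = (1−2ε z_i)/(2k)` (1-indexed). -/
noncomputable def paninski (k : ℕ) (ε : ℝ) (z : Fin k → Bool) : Fin (2 * k) → ℝ :=
  fun x => (1 + (if x.val % 2 = 0 then (1 : ℝ) else -1) * (2 * ε) *
    pm (z ⟨x.val / 2, by have := x.isLt; omega⟩)) / (2 * k)

/-- Chi-square divergence between mass functions on a finite type. -/
noncomputable def chiSq {α : Type*} [Fintype α] (P Q : α → ℝ) : ℝ :=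
  ∑ y, (P y - Q y) ^ 2 / Q y

/-- Kullback–Leibler divergence (in nats) between mass functions on a finite type. -/
noncomputable def klDivNats {α : Type*} [Fintype α] (P Q : α → ℝ) : ℝ :=
  ∑ y, P y * Real.log (P y / Q y)

/-- The leaky-query channel `W_u^η` on output alphabet `[2k] ∪ {1*, 0*}`
(`Sum.inr true = 1*`, `Sum.inr false = 0*`). -/
noncomputable def leaky (k : ℕ) (η : ℝ) (u : Fin (2 * k) → ℝ) :
    Fin (2 * k) → (Fin (2 * k) ⊕ Bool) → ℝ :=
  fun x y => Sum.elim (fun x' => if x' = x then η else 0)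
    (fun b => if b then (1 - η) * u x else (1 - η) * (1 - u x)) y

/-- The vector `δ(u)` associated with a leaky-query channel. -/
noncomputable def leakyDelta (k : ℕ) (u : Fin (2 * k) → ℝ) : Fin k → ℝ :=
  fun i => (u (lo i) - u (hi i)) *
    Real.sqrt ((2 * (k : ℝ)) / ((∑ x, u x) * (2 * (k : ℝ) - ∑ x, u x)))

/-- The partial-erasure channel `W_{x*}` on output alphabet `[2k] ∪ {⊥}`. -/
noncomputable def eraseCh (k : ℕ) (η : ℝ) (xs : Fin (2 * k)) :
    Fin (2 * k) → (Fin (2 * k) ⊕ Unit) → ℝ :=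
  fun x y => Sum.elim (fun x' => if x' = x then (if x = xs then 1 else η) else 0)
    (fun _ => if x = xs then 0 else 1 - η) y

/-- The family of all `ρ`-locally differentially private channels from `[2k]` to `𝒴`. -/
def ldpFamily (k : ℕ) {𝒴 : Type*} [Fintype 𝒴] (ρ : ℝ) :
    Set (Fin (2 * k) → 𝒴 → ℝ) :=
  { W | IsChannel W ∧ ∀ x x' y, W x y ≤ Real.exp ρ * W x' y }

/-!
For `u ∈ [0,1]^{2k}` the information matrix of the leaky-query channel is a scalar matrix plus a
positive rank-one matrix, `H(W_u^η) = 2η • 1 + c_u • w wᵀ` with `w_i = u_{2i-1} - u_{2i}` and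
`c_u = (1 - η)(1/Σu + 1/Σ(1 - u))`: the leaked symbol contributes `2η • 1`, the two answers of the
query the rank-one part. Its eigenvalues lie in `[2η, 2η + t]` with `t = c_u ‖w‖²`, and `w` itself
is an eigenvector for `2η + t`. Since `(u_{2i-1} - u_{2i})² ≤ u_{2i-1} + u_{2i}`, and likewise for
`1 - u`, `‖w‖²` is at most both `Σu` and `Σ(1 - u)`, so `t ≤ 2(1 - η)`. Hence the nuclear norm is
the trace `2ηk + t`, the operator norm is `2η + t ≤ 2` with equality for `u = (1,0,1,0,…)`, and the
squared Frobenius norm is `4η²k + 4ηt + t²`; for `η = 1/√k` these are the stated bounds.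
-/

open Matrix

lemma csSup_image_mem_Icc {α : Type*} {s : Set α} (hs : s.Nonempty) {f : α → ℝ} {a b : ℝ}
    (h : ∀ x ∈ s, f x ∈ Set.Icc a b) : sSup (f '' s) ∈ Set.Icc a b := by
  obtain ⟨x, hx⟩ := hs
  have hb : ∀ y ∈ f '' s, y ≤ b := Set.forall_mem_image.2 fun y hy => (h y hy).2
  exact ⟨(h x hx).1.trans (le_csSup ⟨b, hb⟩ (Set.mem_image_of_mem f hx)),
    csSup_le ⟨f x, Set.mem_image_of_mem f hx⟩ hb⟩

lemma inv_add_inv_mul_le_two {S S' t : ℝ} (ht : 0 ≤ t) (hS : t ≤ S) (hS' : t ≤ S') :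
    (S⁻¹ + S'⁻¹) * t ≤ 2 := by
  rw [add_mul]
  linarith [inv_mul_le_one_of_le₀ hS (ht.trans hS), inv_mul_le_one_of_le₀ hS' (ht.trans hS')]

section Pairs

variable {k : ℕ}

lemma lo_injective : Function.Injective (lo (k := k)) := fun i j h => by
  simpa [lo, Fin.ext_iff] using h

lemma hi_injective : Function.Injective (hi (k := k)) := fun i j h => by
  simpa [hi, Fin.ext_iff] using h

lemma lo_ne_hi (i j : Fin k) : lo i ≠ hi j := fun h => by
  simp only [lo, hi, Fin.ext_iff] at h; omega

lemma sum_eq_sum_lo_add_hi {M : Type*} [AddCommMonoid M] (f : Fin (2 * k) → M) :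
    ∑ x, f x = ∑ i, (f (lo i) + f (hi i)) := by
  rw [← (finProdFinEquiv.trans (finCongr (mul_comm k 2))).sum_comp, Fintype.sum_prod_type]
  refine Finset.sum_congr rfl fun i _ => ?_
  rw [Fin.sum_univ_two]
  congr 2 <;> ext <;> simp [finProdFinEquiv, lo, hi, mul_comm, add_comm]

def pairDiff (u : Fin (2 * k) → ℝ) : Fin k → ℝ := fun i => u (lo i) - u (hi i)

lemma sum_pairDiff_sq_le {u : Fin (2 * k) → ℝ} (hu : ∀ x, u x ∈ Set.Icc (0 : ℝ) 1) :
    ∑ i, pairDiff u i ^ 2 ≤ ∑ x, u x := by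
  rw [sum_eq_sum_lo_add_hi]
  refine Finset.sum_le_sum fun i _ => ?_
  obtain ⟨h₀, h₁⟩ := hu (lo i)
  obtain ⟨h₀', h₁'⟩ := hu (hi i)
  unfold pairDiff
  nlinarith

lemma pairDiff_one_sub (u : Fin (2 * k) → ℝ) : pairDiff (fun x => 1 - u x) = -pairDiff u := by
  ext i; simp only [pairDiff, Pi.neg_apply]; ring

end Pairs

section ChannelInformation

variable {k : ℕ}

lemma HMat_sum_type {𝒴 𝒵 : Type*} [Fintype 𝒴] [Fintype 𝒵] (W : Fin (2 * k) → 𝒴 ⊕ 𝒵 → ℝ) :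
    HMat k W = HMat k (fun x y => W x (.inl y)) + HMat k (fun x z => W x (.inr z)) := by
  ext i j
  simp only [HMat, Matrix.add_apply, Fintype.sum_sum_type]

lemma HMat_leak (η : ℝ) :
    HMat k (fun x (y : Fin (2 * k)) => if y = x then η else 0) = (2 * η) • 1 := by
  ext i j
  simp only [HMat, Finset.sum_ite_eq, Finset.mem_univ, if_true]
  rw [sum_eq_sum_lo_add_hi]
  simp only [lo_injective.eq_iff, hi_injective.eq_iff, lo_ne_hi, (lo_ne_hi _ _).symm, ↓reduceIte,
    sub_zero, zero_sub, mul_ite, ite_mul, zero_mul, mul_zero, mul_neg, neg_mul, Matrix.smul_apply,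
    Matrix.one_apply, smul_eq_mul, mul_one]
  simp +contextual only [eq_comm (a := i)]
  simp only [Finset.sum_add_distrib, ← Finset.sum_div, Finset.sum_neg_distrib, Finset.sum_ite_eq',
    Finset.mem_univ, if_true]
  split_ifs <;> simp [mul_self_div_self, two_mul]

lemma HMat_query (s : ℝ) (u : Fin (2 * k) → ℝ) :
    HMat k (fun x (b : Bool) => if b then s * u x else s * (1 - u x)) =
      (s * ((∑ x, u x)⁻¹ + (∑ x, (1 - u x))⁻¹)) • vecMulVec (pairDiff u) (pairDiff u) := by
  ext i j
  simp only [HMat, Fintype.sum_bool, if_true, Bool.false_eq_true, if_false, ← Finset.mul_sum,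
    Matrix.smul_apply, vecMulVec_apply, pairDiff, smul_eq_mul]
  rcases eq_or_ne s 0 with rfl | hs
  · simp
  · have hss : s * s⁻¹ = 1 := mul_inv_cancel₀ hs
    simp only [div_eq_mul_inv, mul_inv]
    linear_combination (s * (u (lo i) - u (hi i)) * (u (lo j) - u (hi j)) *
      ((∑ x, u x)⁻¹ + (∑ x, (1 - u x))⁻¹)) * hss

noncomputable def queryCoeff (η : ℝ) (u : Fin (2 * k) → ℝ) : ℝ :=
  (1 - η) * ((∑ x, u x)⁻¹ + (∑ x, (1 - u x))⁻¹)

lemma HMat_leaky (η : ℝ) (u : Fin (2 * k) → ℝ) :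
    HMat k (leaky k η u) = (2 * η) • 1 + queryCoeff η u • vecMulVec (pairDiff u) (pairDiff u) := by
  rw [HMat_sum_type, ← HMat_leak, queryCoeff, ← HMat_query]
  rfl

end ChannelInformation

section Spectral

variable {n : Type*} [Fintype n]

lemma real_dotProduct_self_nonneg (w : n → ℝ) : 0 ≤ w ⬝ᵥ w :=
  Finset.sum_nonneg fun i _ => mul_self_nonneg (w i)

variable [DecidableEq n]

lemma eigenvalues_le_of_dotProduct_mulVec_le {A : Matrix n n ℝ} (hA : A.IsHermitian) {B : ℝ}
    (h : ∀ v, v ⬝ᵥ (A *ᵥ v) ≤ B * (v ⬝ᵥ v)) (i : n) : hA.eigenvalues i ≤ B := by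
  have hv : (hA.eigenvectorBasis i : n → ℝ) ⬝ᵥ hA.eigenvectorBasis i = 1 := by
    have := real_inner_self_eq_norm_sq (hA.eigenvectorBasis i)
    rwa [hA.eigenvectorBasis.orthonormal.1 i, one_pow, EuclideanSpace.inner_eq_star_dotProduct,
      star_trivial] at this
  have := h (hA.eigenvectorBasis i)
  rw [hv, mul_one] at this
  simpa [hA.eigenvalues_eq i] using this

variable {a c : ℝ} (w : n → ℝ)

lemma posSemidef_smul_one_add_smul_vecMulVec (ha : 0 ≤ a) (hc : 0 ≤ c) :
    (a • 1 + c • vecMulVec w w : Matrix n n ℝ).PosSemidef :=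
  (PosSemidef.one.smul ha).add (by simpa using (posSemidef_vecMulVec_self_star w).smul hc)

lemma smul_one_add_smul_vecMulVec_mulVec (v : n → ℝ) :
    (a • 1 + c • vecMulVec w w : Matrix n n ℝ) *ᵥ v = a • v + (c * (w ⬝ᵥ v)) • w := by
  ext i
  simp [add_mulVec, smul_mulVec, vecMulVec_mulVec, mul_comm, mul_left_comm]

lemma dotProduct_smul_one_add_smul_vecMulVec_mulVec_le (hc : 0 ≤ c) (v : n → ℝ) :
    v ⬝ᵥ ((a • 1 + c • vecMulVec w w : Matrix n n ℝ) *ᵥ v) ≤ (a + c * (w ⬝ᵥ w)) * (v ⬝ᵥ v) := by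
  have hcs : (w ⬝ᵥ v) ^ 2 ≤ (w ⬝ᵥ w) * (v ⬝ᵥ v) := by
    simpa only [dotProduct, sq] using Finset.sum_mul_sq_le_sq_mul_sq univ w v
  rw [smul_one_add_smul_vecMulVec_mulVec, dotProduct_add, dotProduct_smul, dotProduct_smul,
    dotProduct_comm v w, smul_eq_mul, smul_eq_mul]
  nlinarith [mul_le_mul_of_nonneg_left hcs hc]

lemma trace_smul_one_add_smul_vecMulVec :
    (a • 1 + c • vecMulVec w w : Matrix n n ℝ).trace = a * Fintype.card n + c * (w ⬝ᵥ w) := by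
  simp

lemma sum_sq_smul_one_add_smul_vecMulVec :
    ∑ i, ∑ j, (a • 1 + c • vecMulVec w w : Matrix n n ℝ) i j ^ 2 =
      a ^ 2 * Fintype.card n + 2 * a * (c * (w ⬝ᵥ w)) + (c * (w ⬝ᵥ w)) ^ 2 := by
  simp only [Matrix.add_apply, Matrix.smul_apply, one_apply, vecMulVec_apply, smul_eq_mul, add_sq,
    Finset.sum_add_distrib]
  simp only [mul_ite, mul_one, mul_zero, ite_pow, sq, Finset.sum_ite_eq, Finset.mem_univ,
    ↓reduceIte, Finset.sum_const, Finset.card_univ, nsmul_eq_mul, ite_mul, zero_mul, dotProduct,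
    Finset.mul_sum, Finset.sum_mul]
  congr 1
  · ring
  · exact Finset.sum_congr rfl fun _ _ => Finset.sum_congr rfl fun _ _ => by ring

end Spectral

section FinNorms

variable {k : ℕ} {A : Matrix (Fin k) (Fin k) ℝ}

lemma nucNorm_eq_trace (hA : A.PosSemidef) : nucNorm A = A.trace := by
  rw [nucNorm, dif_pos hA.isHermitian, hA.isHermitian.trace_eq_sum_eigenvalues]
  simp [abs_of_nonneg (hA.eigenvalues_nonneg _)]

lemma opNorm_le_of_dotProduct_mulVec_le (hA : A.PosSemidef) {B : ℝ} (hB : 0 ≤ B)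
    (h : ∀ v, v ⬝ᵥ (A *ᵥ v) ≤ B * (v ⬝ᵥ v)) : opNorm A ≤ B := by
  rw [opNorm, dif_pos hA.isHermitian]
  refine Real.iSup_le (fun i => ?_) hB
  rw [abs_of_nonneg (hA.eigenvalues_nonneg i)]
  exact eigenvalues_le_of_dotProduct_mulVec_le hA.isHermitian h i

lemma abs_le_opNorm_of_mulVec_eq_smul (hA : A.IsHermitian) {v : Fin k → ℝ} (hv : v ≠ 0) {μ : ℝ}
    (h : A *ᵥ v = μ • v) : |μ| ≤ opNorm A := by
  have hμ : μ ∈ spectrum ℝ A := by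
    rw [← spectrum_toLin']
    exact Module.End.HasEigenvalue.mem_spectrum
      (Module.End.hasEigenvalue_of_hasEigenvector ⟨Module.End.mem_eigenspace_iff.2 h, hv⟩)
  obtain ⟨i, rfl⟩ := hA.spectrum_real_eq_range_eigenvalues ▸ hμ
  rw [opNorm, dif_pos hA]
  exact le_ciSup (f := fun i => |hA.eigenvalues i|) (Set.finite_range _).bddAbove i

variable {a c : ℝ} (w : Fin k → ℝ)

lemma nucNorm_smul_one_add_smul_vecMulVec (ha : 0 ≤ a) (hc : 0 ≤ c) :
    nucNorm (a • 1 + c • vecMulVec w w) = a * k + c * (w ⬝ᵥ w) := by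
  rw [nucNorm_eq_trace (posSemidef_smul_one_add_smul_vecMulVec w ha hc),
    trace_smul_one_add_smul_vecMulVec, Fintype.card_fin]

lemma opNorm_smul_one_add_smul_vecMulVec_le (ha : 0 ≤ a) (hc : 0 ≤ c) :
    opNorm (a • 1 + c • vecMulVec w w) ≤ a + c * (w ⬝ᵥ w) :=
  opNorm_le_of_dotProduct_mulVec_le (posSemidef_smul_one_add_smul_vecMulVec w ha hc)
    (add_nonneg ha (mul_nonneg hc (real_dotProduct_self_nonneg w)))
    (dotProduct_smul_one_add_smul_vecMulVec_mulVec_le w hc)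

lemma opNorm_smul_one_add_smul_vecMulVec (ha : 0 ≤ a) (hc : 0 ≤ c) (hw : w ≠ 0) :
    opNorm (a • 1 + c • vecMulVec w w) = a + c * (w ⬝ᵥ w) := by
  refine (opNorm_smul_one_add_smul_vecMulVec_le w ha hc).antisymm ?_
  have hw_eig : (a • 1 + c • vecMulVec w w) *ᵥ w = (a + c * (w ⬝ᵥ w)) • w := by
    rw [smul_one_add_smul_vecMulVec_mulVec, add_smul]
  have hμ : 0 ≤ a + c * (w ⬝ᵥ w) :=
    add_nonneg ha (mul_nonneg hc (real_dotProduct_self_nonneg w))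
  simpa [abs_of_nonneg hμ] using abs_le_opNorm_of_mulVec_eq_smul
    (posSemidef_smul_one_add_smul_vecMulVec w ha hc).isHermitian hw hw_eig

lemma frobNorm_smul_one_add_smul_vecMulVec :
    frobNorm (a • 1 + c • vecMulVec w w) =
      √(a ^ 2 * k + 2 * a * (c * (w ⬝ᵥ w)) + (c * (w ⬝ᵥ w)) ^ 2) := by
  rw [frobNorm, sum_sq_smul_one_add_smul_vecMulVec, Fintype.card_fin]

end FinNorms

section LeakyQuery

variable {k : ℕ} {η : ℝ} {u : Fin (2 * k) → ℝ}

lemma queryCoeff_nonneg (hη : η ≤ 1) (hu : ∀ x, u x ∈ Set.Icc (0 : ℝ) 1) :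
    0 ≤ queryCoeff η u :=
  mul_nonneg (sub_nonneg.2 hη) (add_nonneg
    (inv_nonneg.2 (Finset.sum_nonneg fun x _ => (hu x).1))
    (inv_nonneg.2 (Finset.sum_nonneg fun x _ => sub_nonneg.2 (hu x).2)))

lemma queryCoeff_mul_le (hη : η ≤ 1) (hu : ∀ x, u x ∈ Set.Icc (0 : ℝ) 1) :
    queryCoeff η u * (pairDiff u ⬝ᵥ pairDiff u) ≤ 2 * (1 - η) := by
  have hu' : ∀ x, 1 - u x ∈ Set.Icc (0 : ℝ) 1 := fun x =>
    ⟨sub_nonneg.2 (hu x).2, by linarith [(hu x).1]⟩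
  have h₁ := sum_pairDiff_sq_le hu
  have h₂ := sum_pairDiff_sq_le hu'
  simp only [pairDiff_one_sub, Pi.neg_apply, neg_sq] at h₂
  have hww : pairDiff u ⬝ᵥ pairDiff u = ∑ i, pairDiff u i ^ 2 := by simp [dotProduct, sq]
  rw [queryCoeff, mul_assoc, hww, mul_comm (2 : ℝ)]
  exact mul_le_mul_of_nonneg_left
    (inv_add_inv_mul_le_two (Finset.sum_nonneg fun i _ => sq_nonneg _) h₁ h₂) (sub_nonneg.2 hη)

lemma nucNorm_HMat_leaky_mem_Icc (hη₀ : 0 ≤ η) (hη₁ : η ≤ 1)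
    (hu : ∀ x, u x ∈ Set.Icc (0 : ℝ) 1) :
    nucNorm (HMat k (leaky k η u)) ∈ Set.Icc (2 * η * k) (2 * η * k + 2 * (1 - η)) := by
  have hc := queryCoeff_nonneg hη₁ hu
  rw [HMat_leaky, nucNorm_smul_one_add_smul_vecMulVec _ (by positivity) hc]
  exact ⟨le_add_of_nonneg_right (mul_nonneg hc (real_dotProduct_self_nonneg _)),
    (add_le_add_iff_left _).2 (queryCoeff_mul_le hη₁ hu)⟩

lemma opNorm_HMat_leaky_le (hη₀ : 0 ≤ η) (hη₁ : η ≤ 1) (hu : ∀ x, u x ∈ Set.Icc (0 : ℝ) 1) :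
    opNorm (HMat k (leaky k η u)) ≤ 2 := by
  rw [HMat_leaky]
  linarith [opNorm_smul_one_add_smul_vecMulVec_le (pairDiff u) (by positivity : 0 ≤ 2 * η)
    (queryCoeff_nonneg hη₁ hu), queryCoeff_mul_le hη₁ hu]

lemma frobNorm_HMat_leaky_mem_Icc (hη₀ : 0 ≤ η) (hη₁ : η ≤ 1)
    (hu : ∀ x, u x ∈ Set.Icc (0 : ℝ) 1) :
    frobNorm (HMat k (leaky k η u)) ∈
      Set.Icc √(4 * η ^ 2 * k) √(4 * η ^ 2 * k + 4 * (1 - η ^ 2)) := by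
  have ht₀ : 0 ≤ queryCoeff η u * (pairDiff u ⬝ᵥ pairDiff u) :=
    mul_nonneg (queryCoeff_nonneg hη₁ hu) (real_dotProduct_self_nonneg _)
  have ht₁ := queryCoeff_mul_le hη₁ hu
  rw [HMat_leaky, frobNorm_smul_one_add_smul_vecMulVec]
  constructor <;> apply Real.sqrt_le_sqrt <;> nlinarith

lemma opNorm_HMat_leaky_even (hk : 1 ≤ k) (hη₀ : 0 ≤ η) (hη₁ : η ≤ 1) :
    opNorm (HMat k (leaky k η fun x => if x.val % 2 = 0 then 1 else 0)) = 2 := by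
  set u : Fin (2 * k) → ℝ := fun x => if x.val % 2 = 0 then 1 else 0
  have hlo_hi : ∀ i, u (lo i) = 1 ∧ u (hi i) = 0 := fun i => by simp [u, lo, hi, Nat.add_mod]
  have hw : pairDiff u = 1 := funext fun i => by simp [pairDiff, hlo_hi i]
  have hS : ∑ x, u x = k := by simp [sum_eq_sum_lo_add_hi, hlo_hi]
  have hS' : ∑ x, (1 - u x) = k := by simp [sum_eq_sum_lo_add_hi, hlo_hi, two_mul]
  have hk₀ : (k : ℝ) ≠ 0 := by positivity
  have hc : queryCoeff η u = (1 - η) * (2 / k) := by rw [queryCoeff, hS, hS']; ring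
  rw [HMat_leaky, opNorm_smul_one_add_smul_vecMulVec _ (by positivity) (by rw [hc]; positivity)
    (by simp [hw, Function.ne_iff, Fin.exists_iff]; exact ⟨0, hk⟩), hc, hw]
  simp only [one_dotProduct_one, Fintype.card_fin]
  field_simp
  ring

end LeakyQuery

/-- Norms of the family of leaky-query channels with leakage
`η = 1/√k`: `2 ≤ ‖𝒲‖_F ≤ 2√2`, `2√k ≤ ‖𝒲‖_* ≤ 2√k + 2`, and `‖𝒲‖_op = 2`. -/
theorem leaky_query_family_norms
    (k : ℕ) (hk : 1 ≤ k)
    (𝒲 : Set (Fin (2 * k) → (Fin (2 * k) ⊕ Bool) → ℝ))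
    (h𝒲 : 𝒲 = { W | ∃ u : Fin (2 * k) → ℝ,
      (∀ x, u x ∈ Set.Icc (0 : ℝ) 1) ∧ W = leaky k (Real.sqrt k)⁻¹ u }) :
    (2 ≤ famFrob k 𝒲 ∧ famFrob k 𝒲 ≤ 2 * Real.sqrt 2) ∧
      (2 * Real.sqrt k ≤ famNuc k 𝒲 ∧ famNuc k 𝒲 ≤ 2 * Real.sqrt k + 2) ∧
      famOp k 𝒲 = 2 := by
  subst h𝒲
  have hk₀ : (0 : ℝ) < k := by exact_mod_cast hk
  have hη₀ : 0 ≤ (√k)⁻¹ := by positivity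
  have hη₁ : (√k)⁻¹ ≤ 1 := inv_le_one_of_one_le₀ (Real.one_le_sqrt.2 (by exact_mod_cast hk))
  have hηk : 2 * (√k)⁻¹ * k = 2 * √k := by rw [mul_assoc, inv_mul_eq_div, Real.div_sqrt]
  have hηsq : 4 * (√k)⁻¹ ^ 2 * k = 4 := by
    rw [inv_pow, Real.sq_sqrt hk₀.le]; field_simp
  have hne : {W | ∃ u : Fin (2 * k) → ℝ,
      (∀ x, u x ∈ Set.Icc (0 : ℝ) 1) ∧ W = leaky k (√k)⁻¹ u}.Nonempty :=
    ⟨_, fun _ => 0, fun _ => ⟨le_rfl, zero_le_one⟩, rfl⟩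
  refine ⟨csSup_image_mem_Icc hne ?_, csSup_image_mem_Icc hne ?_, IsGreatest.csSup_eq ⟨?_, ?_⟩⟩
  · rintro _ ⟨u, hu, rfl⟩
    refine Set.Icc_subset_Icc ?_ ?_ (frobNorm_HMat_leaky_mem_Icc hη₀ hη₁ hu)
    · rw [hηsq, show (4 : ℝ) = 2 ^ 2 by norm_num, Real.sqrt_sq zero_le_two]
    · rw [hηsq, show 2 * √2 = √(2 ^ 2 * 2) by simp]
      exact Real.sqrt_le_sqrt (by nlinarith)
  · rintro _ ⟨u, hu, rfl⟩
    refine Set.Icc_subset_Icc hηk.ge ?_ (nucNorm_HMat_leaky_mem_Icc hη₀ hη₁ hu)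
    linarith
  · refine ⟨_, ⟨_, fun x => ?_, rfl⟩, opNorm_HMat_leaky_even hk hη₀ hη₁⟩
    split_ifs <;> simp
  · rintro _ ⟨_, ⟨u, hu, rfl⟩, rfl⟩
    exact opNorm_HMat_leaky_le hη₀ hη₁ hu

end Paper
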